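/- If u, v ∈ 𝕍 and u is a prefix of v (as lists), then u = v. -/

import Mathlib

/-- The three truth symbols F, 0 (Z), T. -/
inductive TSym : Type
  | F | Z | T
deriving DecidableEq

open TSym

/-- The operation u ≫ v on lists of symbols. -/
def lexOp (u v : List TSym) : List TSym :=
  if u = [F] ∧ v = [F] then [F]
  else if u = [T] ∧ v = [T] then [T]
  else Z :: (u ++ v)

/-- The truth domain 𝕍 as an inductive predicate. -/
inductive Vmem : List TSym → Prop
  | F : Vmem [F]
  | T : Vmem [T]
  | op {u v : List TSym} : Vmem u → Vmem v → Vmem (lexOp u v)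

def symRank : TSym → ℕ
  | F => 0 | Z => 1 | T => 2

/-- The order F < 0 < T on symbols. -/
def symLt (a b : TSym) : Prop := symRank a < symRank b

/-- Lexicographic order on lists induced by F < 0 < T. -/
def listLt (u v : List TSym) : Prop := List.Lex symLt u v

/-- Pointwise negation F ↦ T, T ↦ F, 0 ↦ 0. -/
def symNeg : TSym → TSym
  | F => T | T => F | Z => Z

def negList (v : List TSym) : List TSym := v.map symNeg

def symVal : TSym → ℚ
  | F => -1 | Z => 0 | T => 1

/-- val([u₁,…,u_n]) = Σ symVal(u_i) · (1/3)^(i-1). -/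
def val : List TSym → ℚ
  | [] => 0
  | a :: t => symVal a + val t / 3

open Classical in
/-- Lexicographic minimum. -/
noncomputable def minL (u v : List TSym) : List TSym := if listLt u v then u else v

open Classical in
/-- Lexicographic maximum. -/
noncomputable def maxL (u v : List TSym) : List TSym := if listLt u v then v else u

/-!
Read `Z` as a binary node and `F`, `T` as leaves: every member of 𝕍 (the collapsing cases
`[F] ≫ [F] = [F]`, `[T] ≫ [T] = [T]` included) is then the Polish notation of a binary tree.
Weighting `Z` by `+1` and leaves by `-1`, such a word has total weight `-1` while each of its
proper prefixes has weight `≥ 0`, so no member of 𝕍 is a proper prefix of another.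
-/

theorem List.prefix_append_iff {α : Type*} {p l₁ l₂ : List α} :
    p <+: l₁ ++ l₂ ↔ p <+: l₁ ∨ ∃ r, r <+: l₂ ∧ p = l₁ ++ r := by
  constructor
  · rintro ⟨t, ht⟩
    rcases List.append_eq_append_iff.mp ht with ⟨c, rfl, -⟩ | ⟨c, rfl, rfl⟩
    · exact .inl (List.prefix_append _ _)
    · exact .inr ⟨c, List.prefix_append _ _, rfl⟩
  · rintro (h | ⟨r, hr, rfl⟩)
    · exact h.trans (List.prefix_append _ _)
    · exact (List.prefix_append_right_inj l₁).mpr hr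

def symWeight : TSym → ℤ
  | Z => 1
  | F | T => -1

def weight (l : List TSym) : ℤ := (l.map symWeight).sum

@[simp]
lemma weight_nil : weight [] = 0 := rfl

@[simp]
lemma weight_cons (a : TSym) (l : List TSym) : weight (a :: l) = symWeight a + weight l := by
  simp [weight]

@[simp]
lemma weight_append (l₁ l₂ : List TSym) : weight (l₁ ++ l₂) = weight l₁ + weight l₂ := by
  simp [weight]

def IsLukasiewicz (w : List TSym) : Prop :=
  weight w = -1 ∧ ∀ p, p <+: w → p ≠ w → 0 ≤ weight p

namespace IsLukasiewicz

variable {p w : List TSym}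

lemma neg_one_le_weight_of_prefix (hw : IsLukasiewicz w) (h : p <+: w) : -1 ≤ weight p := by
  by_cases hpw : p = w
  · exact hpw ▸ hw.1.ge
  · linarith [hw.2 p h hpw]

lemma eq_of_prefix (hw : IsLukasiewicz w) (hp : weight p = -1) (h : p <+: w) : p = w := by
  by_contra hpw
  linarith [hw.2 p h hpw]

lemma singleton {a : TSym} (ha : symWeight a = -1) : IsLukasiewicz [a] := by
  refine ⟨by simp [ha], fun p hp hpa => ?_⟩
  rcases List.prefix_cons_iff.mp hp with rfl | ⟨t, rfl, ht⟩
  · simp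
  · exact absurd (by simpa using ht) hpa

lemma node {u v : List TSym} (hu : IsLukasiewicz u) (hv : IsLukasiewicz v) :
    IsLukasiewicz (Z :: (u ++ v)) := by
  refine ⟨by simp [hu.1, hv.1, symWeight], fun p hp hpw => ?_⟩
  rcases List.prefix_cons_iff.mp hp with rfl | ⟨q, rfl, hq⟩
  · simp
  rcases List.prefix_append_iff.mp hq with hqu | ⟨r, hrv, rfl⟩
  · simp only [weight_cons, symWeight]
    linarith [hu.neg_one_le_weight_of_prefix hqu]
  · have hrne : r ≠ v := by rintro rfl; exact hpw rfl
    simp [symWeight, hu.1, hv.2 r hrv hrne]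

end IsLukasiewicz

lemma Vmem.isLukasiewicz {w : List TSym} (hw : Vmem w) : IsLukasiewicz w := by
  induction hw with
  | F => exact .singleton rfl
  | T => exact .singleton rfl
  | op _ _ hu hv =>
    unfold lexOp
    split_ifs
    · exact .singleton rfl
    · exact .singleton rfl
    · exact hu.node hv

theorem prefix_eq (u v : List TSym) (hu : Vmem u) (hv : Vmem v) (h : u <+: v) : u = v :=
  hv.isLukasiewicz.eq_of_prefix hu.isLukasiewicz.1 h
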